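/- arXiv:1802.01088 — 3 statements merged into one kernel-verified Lean document; each statement's English description precedes it below -/
import Mathlib

section
/- Define P(R, d, β) = (1/(2π)) ∫₀^{2π} [P₂ / (P₂ + P₁ β d^α (R² − 2dR cos ν + d²)^{−α/2})] dν · exp(−β^{2/α} ∫_{[R−d]⁺}^∞ c₀(y,R) dy), where c₀ is as in the context. Then lim_{R→0⁺} P(R, d, β) = [P₂/(P₂ + P₁β)] · exp(−πλ₁ (P₁ β d^α / P₂)^{2/α} ∫₀^∞ du/(1+u^{α/2})), which is strictly positive. -/
open Real MeasureTheory

/-- The interference-kernel `c₀(y,R)` of the opportunistic probability. -/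
noncomputable def opKernel (lam1 P₁ P₂ d α : ℝ) (R y : ℝ) : ℝ :=
  if |R - d| < y ∧ y ≤ R + d then
    (2 * lam1 * P₁ * d ^ α * y ^ (1 - α)) / (P₂ + P₁ * d ^ α * y ^ (-α)) *
      Real.arccos ((R ^ 2 - d ^ 2 - y ^ 2) / (2 * d * y))
  else
    (2 * π * lam1 * P₁ * d ^ α * y ^ (1 - α)) / (P₂ + P₁ * d ^ α * y ^ (-α))

/-- The opportunistic probability `P(R,d,β)`. -/
noncomputable def opProb (lam1 P₁ P₂ d α β : ℝ) (R : ℝ) : ℝ :=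
  ((1 / (2 * π)) * ∫ ν in (0 : ℝ)..(2 * π),
      P₂ / (P₂ + P₁ * β * d ^ α * (R ^ 2 - 2 * d * R * Real.cos ν + d ^ 2) ^ (-(α / 2)))) *
    Real.exp (-(β ^ (2 / α)) * ∫ y in Set.Ioi (max (R - d) 0), opKernel lam1 P₁ P₂ d α R y)

section Aux

open Set Filter


theorem gInt (lam1 P₁ P₂ d α : ℝ) (hlam1 : 0 < lam1) (hP1 : 0 < P₁) (hP2 : 0 < P₂)
    (hd : 0 < d) (hα : 2 < α) :
    IntegrableOn (fun y : ℝ => (2 * π * lam1 * P₁ * d ^ α * y ^ (1 - α)) /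
      (P₂ + P₁ * d ^ α * y ^ (-α))) (Ioi (0:ℝ)) := by
  have hda : 0 < d ^ α := rpow_pos_of_pos hd α
  have hmeas : Measurable (fun y : ℝ => (2 * π * lam1 * P₁ * d ^ α * y ^ (1 - α)) /
      (P₂ + P₁ * d ^ α * y ^ (-α))) := by measurability
  rw [← Ioc_union_Ioi_eq_Ioi (le_of_lt one_pos)]
  apply IntegrableOn.union
  · apply Integrable.mono (g := fun _ : ℝ => 2*π*lam1)
      (integrableOn_const measure_Ioc_lt_top.ne) (hmeas.aestronglyMeasurable.restrict)
    filter_upwards [ae_restrict_mem measurableSet_Ioc] with y hy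
    have hy0 : (0:ℝ) < y := hy.1
    have h1 : 0 < y ^ (1-α) := rpow_pos_of_pos hy0 _
    have h2 : 0 < y ^ (-α) := rpow_pos_of_pos hy0 _
    have hden : 0 < P₁ * d ^ α * y ^ (-α) := by positivity
    rw [Real.norm_eq_abs, abs_of_nonneg (by positivity), Real.norm_eq_abs,
      abs_of_nonneg (by positivity)]
    have hsplit : y ^ (1-α) = y * y ^ (-α) := by
      rw [sub_eq_add_neg, Real.rpow_add hy0, Real.rpow_one]
    have heq : (2 * π * lam1 * P₁ * d ^ α * y ^ (1 - α)) / (P₁ * d ^ α * y ^ (-α)) =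
        2 * π * lam1 * y := by
      rw [hsplit]; field_simp
    calc (2 * π * lam1 * P₁ * d ^ α * y ^ (1 - α)) / (P₂ + P₁ * d ^ α * y ^ (-α))
        ≤ (2 * π * lam1 * P₁ * d ^ α * y ^ (1 - α)) / (P₁ * d ^ α * y ^ (-α)) :=
          div_le_div_of_nonneg_left (by positivity) hden (by linarith)
      _ = 2 * π * lam1 * y := heq
      _ ≤ 2 * π * lam1 := by
          have := mul_le_mul_of_nonneg_left hy.2 (show (0:ℝ) ≤ 2*π*lam1 by positivity)
          simpa using this
  · apply Integrable.mono (g := fun y : ℝ => (2*π*lam1*P₁*d^α/P₂) * y ^ (1-α))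
      ((integrableOn_Ioi_rpow_of_lt (by linarith) one_pos).const_mul _)
      (hmeas.aestronglyMeasurable.restrict)
    filter_upwards [ae_restrict_mem measurableSet_Ioi] with y hy
    have hy0 : (0:ℝ) < y := lt_trans one_pos hy
    have h1 : 0 < y ^ (1-α) := rpow_pos_of_pos hy0 _
    have h2 : 0 < y ^ (-α) := rpow_pos_of_pos hy0 _
    rw [Real.norm_eq_abs, abs_of_nonneg (by positivity), Real.norm_eq_abs,
      abs_of_nonneg (by positivity)]
    calc (2 * π * lam1 * P₁ * d ^ α * y ^ (1 - α)) / (P₂ + P₁ * d ^ α * y ^ (-α))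
        ≤ (2 * π * lam1 * P₁ * d ^ α * y ^ (1 - α)) / P₂ :=
          div_le_div_of_nonneg_left (by positivity) hP2 (le_add_of_nonneg_right (by positivity))
      _ = (2*π*lam1*P₁*d^α/P₂) * y ^ (1-α) := by ring


theorem gIdent (lam1 P₁ P₂ d α : ℝ) (hlam1 : 0 < lam1) (hP1 : 0 < P₁) (hP2 : 0 < P₂)
    (hd : 0 < d) (hα : 2 < α) :
    (∫ y in Ioi (0:ℝ), (2 * π * lam1 * P₁ * d ^ α * y ^ (1 - α)) /
      (P₂ + P₁ * d ^ α * y ^ (-α))) =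
    π * lam1 * (P₁ * d ^ α / P₂) ^ (2/α) * ∫ u in Ioi (0:ℝ), 1 / (1 + u ^ (α/2)) := by
  have hα0 : α ≠ 0 := by linarith
  have hda : 0 < d ^ α := rpow_pos_of_pos hd α
  have hX : (0:ℝ) < P₁ * d ^ α / P₂ := by positivity
  set c : ℝ := (P₁ * d ^ α / P₂) ^ (α⁻¹) with hc
  have hc0 : 0 < c := rpow_pos_of_pos hX _
  have hcα : c ^ α = P₁ * d ^ α / P₂ := by
    rw [hc, ← Real.rpow_mul hX.le, inv_mul_cancel₀ hα0, Real.rpow_one]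
  -- Step A: K = ∫ 2x/(1+x^α)
  have stepA : (∫ x in Ioi (0:ℝ), 2 * x / (1 + x ^ α)) =
      ∫ u in Ioi (0:ℝ), 1 / (1 + u ^ (α/2)) := by
    rw [← integral_comp_rpow_Ioi (fun u => 1 / (1 + u ^ (α/2))) (two_ne_zero (α := ℝ))]
    apply setIntegral_congr_fun measurableSet_Ioi
    intro x hx
    have hx0 : (0:ℝ) < x := hx
    have : ((x:ℝ) ^ (2:ℝ)) ^ (α/2) = x ^ α := by
      rw [← Real.rpow_mul hx0.le]; congr 1; ring
    simp only [smul_eq_mul]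
    rw [abs_of_nonneg (by norm_num : (0:ℝ) ≤ 2), show (2:ℝ)-1 = 1 by norm_num,
      Real.rpow_one, this]
    ring
  -- Step B: rewrite g to F
  have stepB : (∫ y in Ioi (0:ℝ), (2 * π * lam1 * P₁ * d ^ α * y ^ (1 - α)) /
      (P₂ + P₁ * d ^ α * y ^ (-α))) =
      ∫ y in Ioi (0:ℝ), 2 * π * lam1 * P₁ * d ^ α * y / (P₂ * y ^ α + P₁ * d ^ α) := by
    apply setIntegral_congr_fun measurableSet_Ioi
    intro y hy
    have hy0 : (0:ℝ) < y := hy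
    have h2 : 0 < y ^ (-α) := rpow_pos_of_pos hy0 _
    have hya : 0 < y ^ α := rpow_pos_of_pos hy0 _
    have hsplit : y ^ (1-α) = y * y ^ (-α) := by
      rw [sub_eq_add_neg, Real.rpow_add hy0, Real.rpow_one]
    have hinv : y ^ (-α) * y ^ α = 1 := by
      rw [← Real.rpow_add hy0, neg_add_cancel, Real.rpow_zero]
    dsimp only
    rw [div_eq_div_iff (by positivity) (by positivity), hsplit]
    linear_combination (2 * π * lam1 * P₁ * d ^ α * y * P₂) * hinv
  rw [stepB, ← stepA]
  -- Step C: substitution y = c x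
  have subst := integral_comp_mul_left_Ioi
    (fun y => 2 * π * lam1 * P₁ * d ^ α * y / (P₂ * y ^ α + P₁ * d ^ α)) 0 hc0
  rw [mul_zero] at subst
  have hFcx : (∫ x in Ioi (0:ℝ),
      2 * π * lam1 * P₁ * d ^ α * (c * x) / (P₂ * (c * x) ^ α + P₁ * d ^ α)) =
      ∫ x in Ioi (0:ℝ), (π * lam1 * c) * (2 * x / (1 + x ^ α)) := by
    apply setIntegral_congr_fun measurableSet_Ioi
    intro x hx
    have hx0 : (0:ℝ) < x := hx
    have hxa : 0 < x ^ α := rpow_pos_of_pos hx0 _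
    have hmul : (c * x) ^ α = c ^ α * x ^ α := Real.mul_rpow hc0.le hx0.le
    dsimp only
    rw [hmul, hcα, show P₂ * (P₁ * d ^ α / P₂ * x ^ α) = P₁ * d ^ α * x ^ α from by
      field_simp]
    have hA : P₁ * d ^ α * x ^ α + P₁ * d ^ α ≠ 0 := by positivity
    have hB : (1:ℝ) + x ^ α ≠ 0 := by positivity
    field_simp
    ring
  rw [hFcx, integral_const_mul] at subst
  simp only [smul_eq_mul] at subst
  have : (∫ y in Ioi (0:ℝ), 2 * π * lam1 * P₁ * d ^ α * y / (P₂ * y ^ α + P₁ * d ^ α)) =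
      c * (π * lam1 * c * ∫ x in Ioi (0:ℝ), 2 * x / (1 + x ^ α)) := by
    rw [subst, ← mul_assoc, mul_inv_cancel₀ hc0.ne', one_mul]
  rw [this]
  have hcc : c * c = (P₁ * d ^ α / P₂) ^ (2/α) := by
    rw [hc, ← Real.rpow_add hX]
    congr 1
    field_simp
    norm_num
  rw [← hcc]; ring

theorem kernel_tendsto (lam1 P₁ P₂ d α : ℝ) (hlam1 : 0 < lam1) (hP1 : 0 < P₁) (hP2 : 0 < P₂)
    (hd : 0 < d) (hα : 2 < α)
    (hg : IntegrableOn (fun y : ℝ => (2 * π * lam1 * P₁ * d ^ α * y ^ (1 - α)) /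
      (P₂ + P₁ * d ^ α * y ^ (-α))) (Ioi (0:ℝ))) :
    Tendsto (fun R => ∫ y in Ioi (max (R - d) 0), opKernel lam1 P₁ P₂ d α R y)
      (nhdsWithin 0 (Ioi 0))
      (nhds (∫ y in Ioi (0:ℝ), (2 * π * lam1 * P₁ * d ^ α * y ^ (1 - α)) /
        (P₂ + P₁ * d ^ α * y ^ (-α)))) := by
  have hda : 0 < d ^ α := rpow_pos_of_pos hd α
  have hmain : Tendsto (fun R => ∫ y in Ioi (0:ℝ), opKernel lam1 P₁ P₂ d α R y)
      (nhdsWithin 0 (Ioi 0))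
      (nhds (∫ y in Ioi (0:ℝ), (2 * π * lam1 * P₁ * d ^ α * y ^ (1 - α)) /
        (P₂ + P₁ * d ^ α * y ^ (-α)))) := by
    apply tendsto_integral_filter_of_dominated_convergence
      (fun y : ℝ => (2 * π * lam1 * P₁ * d ^ α * y ^ (1 - α)) / (P₂ + P₁ * d ^ α * y ^ (-α)))
    · -- measurability
      refine Filter.Eventually.of_forall (fun R => ?_)
      apply Measurable.aestronglyMeasurable
      unfold opKernel
      apply Measurable.ite
      · exact (measurableSet_lt measurable_const measurable_id).inter
          (measurableSet_le measurable_id measurable_const)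
      · exact Measurable.mul (by fun_prop)
          (Real.continuous_arccos.measurable.comp (by fun_prop))
      · fun_prop
    · -- bound
      refine Filter.Eventually.of_forall (fun R => ?_)
      filter_upwards [ae_restrict_mem measurableSet_Ioi] with y hy
      have hy0 : (0:ℝ) < y := hy
      have h1 : 0 < y ^ (1-α) := rpow_pos_of_pos hy0 _
      have h2 : 0 < y ^ (-α) := rpow_pos_of_pos hy0 _
      have hden : 0 < P₂ + P₁ * d ^ α * y ^ (-α) := by positivity
      unfold opKernel
      split_ifs with h
      · have hfr : (0:ℝ) ≤ (2 * lam1 * P₁ * d ^ α * y ^ (1 - α)) /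
            (P₂ + P₁ * d ^ α * y ^ (-α)) := by positivity
        calc |(2 * lam1 * P₁ * d ^ α * y ^ (1 - α)) / (P₂ + P₁ * d ^ α * y ^ (-α)) *
              Real.arccos ((R ^ 2 - d ^ 2 - y ^ 2) / (2 * d * y))|
            = (2 * lam1 * P₁ * d ^ α * y ^ (1 - α)) / (P₂ + P₁ * d ^ α * y ^ (-α)) *
              Real.arccos ((R ^ 2 - d ^ 2 - y ^ 2) / (2 * d * y)) := by
              rw [abs_mul, abs_of_nonneg hfr, abs_of_nonneg (Real.arccos_nonneg _)]
          _ ≤ (2 * lam1 * P₁ * d ^ α * y ^ (1 - α)) / (P₂ + P₁ * d ^ α * y ^ (-α)) * π :=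
              mul_le_mul_of_nonneg_left (Real.arccos_le_pi _) hfr
          _ = 2 * π * lam1 * P₁ * d ^ α * y ^ (1 - α) / (P₂ + P₁ * d ^ α * y ^ (-α)) := by
              ring
      · rw [Real.norm_eq_abs, abs_of_nonneg (by positivity)]
    · exact hg
    · -- pointwise limit
      have hne : ∀ᵐ y ∂(volume.restrict (Ioi (0:ℝ))), y ≠ d := by
        refine ae_restrict_of_ae ?_
        have : {y : ℝ | ¬ y ≠ d} = {d} := by ext y; simp
        rw [ae_iff, this]
        exact measure_singleton d
      filter_upwards [hne, ae_restrict_mem measurableSet_Ioi] with y hyd hy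
      have hy0 : (0:ℝ) < y := hy
      apply Tendsto.congr' _ tendsto_const_nhds
      have hmem : Ioo (0:ℝ) (min (|y - d|) d) ∈ nhdsWithin (0:ℝ) (Ioi 0) :=
        Ioo_mem_nhdsGT_of_mem ⟨le_refl 0, by
          simp only [lt_min_iff]
          exact ⟨abs_pos.mpr (sub_ne_zero.mpr hyd), hd⟩⟩
      filter_upwards [hmem] with R hR
      have hR0 : 0 < R := hR.1
      have hRy : R < |y - d| := lt_of_lt_of_le hR.2 (min_le_left _ _)
      have hRd : R < d := lt_of_lt_of_le hR.2 (min_le_right _ _)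
      unfold opKernel
      rw [if_neg]
      rintro ⟨h1, h2⟩
      rw [abs_of_neg (by linarith : R - d < 0)] at h1
      rcases lt_or_ge y d with hcase | hcase
      · rw [abs_of_neg (by linarith : y - d < 0)] at hRy
        linarith
      · rw [abs_of_nonneg (by linarith : (0:ℝ) ≤ y - d)] at hRy
        linarith
  apply hmain.congr'
  have hmem : Ioo (0:ℝ) d ∈ nhdsWithin (0:ℝ) (Ioi 0) := Ioo_mem_nhdsGT_of_mem ⟨le_refl 0, hd⟩
  filter_upwards [hmem] with R hR
  obtain ⟨hR1, hR2⟩ := hR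
  rw [max_eq_right (by linarith : R - d ≤ 0)]


theorem angular_tendsto (P₁ P₂ d α β : ℝ) (hP1 : 0 < P₁) (hP2 : 0 < P₂)
    (hd : 0 < d) (hα : 2 < α) (hβ : 0 < β) :
    Tendsto (fun R => ∫ ν in (0:ℝ)..(2*π),
        P₂ / (P₂ + P₁ * β * d ^ α * (R ^ 2 - 2 * d * R * Real.cos ν + d ^ 2) ^ (-(α / 2))))
      (nhdsWithin 0 (Ioi 0)) (nhds (2 * π * (P₂ / (P₂ + P₁ * β)))) := by
  have hda : 0 < d ^ α := rpow_pos_of_pos hd α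
  have hkey : ((d:ℝ) ^ 2) ^ (-(α/2)) = d ^ (-α) := by
    rw [← Real.rpow_natCast d 2, ← Real.rpow_mul hd.le]
    congr 1; push_cast; ring
  have hdd : d ^ α * d ^ (-α) = 1 := by
    rw [← Real.rpow_add hd, add_neg_cancel, Real.rpow_zero]
  have hlim : Tendsto (fun R => ∫ ν in (0:ℝ)..(2*π),
      P₂ / (P₂ + P₁ * β * d ^ α * (R ^ 2 - 2 * d * R * Real.cos ν + d ^ 2) ^ (-(α / 2))))
      (nhdsWithin 0 (Ioi 0))
      (nhds (∫ _ in (0:ℝ)..(2*π), P₂ / (P₂ + P₁ * β))) := by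
    apply intervalIntegral.tendsto_integral_filter_of_dominated_convergence (fun _ : ℝ => (1:ℝ))
    · refine Filter.Eventually.of_forall (fun R => ?_)
      apply Measurable.aestronglyMeasurable
      fun_prop
    · have hmem : Ioo (0:ℝ) d ∈ nhdsWithin (0:ℝ) (Ioi 0) :=
        Ioo_mem_nhdsGT_of_mem ⟨le_refl 0, hd⟩
      filter_upwards [hmem] with R hR
      refine Filter.Eventually.of_forall (fun ν _ => ?_)
      obtain ⟨hR0, hRd⟩ := hR
      have hbase : 0 < R ^ 2 - 2 * d * R * Real.cos ν + d ^ 2 := by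
        have h1 : 2 * d * R * Real.cos ν ≤ 2 * d * R := by
          have := mul_le_mul_of_nonneg_left (Real.cos_le_one ν)
            (by positivity : (0:ℝ) ≤ 2 * d * R)
          simpa using this
        have h2 : 0 < (d - R) ^ 2 := pow_pos (by linarith) 2
        nlinarith
      have hrp : 0 < (R ^ 2 - 2 * d * R * Real.cos ν + d ^ 2) ^ (-(α/2)) :=
        rpow_pos_of_pos hbase _
      rw [Real.norm_eq_abs, abs_of_nonneg (by positivity)]
      rw [div_le_one (by positivity)]
      nlinarith [mul_pos (mul_pos (mul_pos hP1 hβ) hda) hrp]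
    · exact intervalIntegrable_const
    · refine Filter.Eventually.of_forall (fun ν _ => ?_)
      have hb : ContinuousAt (fun R : ℝ => R ^ 2 - 2 * d * R * Real.cos ν + d ^ 2) 0 := by
        fun_prop
      have hb0 : ((0:ℝ) ^ 2 - 2 * d * 0 * Real.cos ν + d ^ 2) = d ^ 2 := by ring
      have hne : ((fun R : ℝ => R ^ 2 - 2 * d * R * Real.cos ν + d ^ 2) 0) ≠ 0 := by
        simp only [hb0]; positivity
      have hr : ContinuousAt
          (fun R : ℝ => (R ^ 2 - 2 * d * R * Real.cos ν + d ^ 2) ^ (-(α/2))) 0 :=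
        ContinuousAt.rpow_const hb (Or.inl hne)
      have hden0 : P₂ + P₁ * β * d ^ α *
          ((0:ℝ) ^ 2 - 2 * d * 0 * Real.cos ν + d ^ 2) ^ (-(α/2)) = P₂ + P₁ * β := by
        rw [hb0, hkey]
        have : P₁ * β * d ^ α * d ^ (-α) = P₁ * β := by
          rw [mul_assoc, hdd, mul_one]
        rw [this]
      have hcont : ContinuousAt (fun R : ℝ =>
          P₂ / (P₂ + P₁ * β * d ^ α * (R ^ 2 - 2 * d * R * Real.cos ν + d ^ 2) ^ (-(α/2)))) 0 := by
        apply ContinuousAt.div continuousAt_const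
        · exact ContinuousAt.add continuousAt_const (ContinuousAt.mul continuousAt_const hr)
        · simp only [hden0]; positivity
      have h2 := hcont.tendsto.mono_left (nhdsWithin_le_nhds (s := Ioi (0:ℝ)))
      simpa only [hden0] using h2
  have : (∫ _ in (0:ℝ)..(2*π), P₂ / (P₂ + P₁ * β)) = 2 * π * (P₂ / (P₂ + P₁ * β)) := by
    rw [intervalIntegral.integral_const, smul_eq_mul, sub_zero]
  rwa [this] at hlim

end Aux

/-- As `R → 0⁺`, the opportunistic probability `P(R,d,β)` converges to the strictly positive
limit `[P₂/(P₂+P₁β)]·exp(−πlam1(P₁βd^α/P₂)^{2/α}∫₀^∞ du/(1+u^{α/2}))`. -/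
theorem opProb_tendsto_asymptotic (lam1 P₁ P₂ d α β : ℝ)
    (hlam1 : 0 < lam1) (hP1 : 0 < P₁) (hP2 : 0 < P₂) (hd : 0 < d) (hα : 2 < α) (hβ : 0 < β) :
    Filter.Tendsto (fun R => opProb lam1 P₁ P₂ d α β R) (nhdsWithin 0 (Set.Ioi 0))
      (nhds (P₂ / (P₂ + P₁ * β) *
        Real.exp (-(π * lam1 * (P₁ * β * d ^ α / P₂) ^ (2 / α) *
          ∫ u in Set.Ioi (0 : ℝ), 1 / (1 + u ^ (α / 2)))))) ∧
    0 < P₂ / (P₂ + P₁ * β) *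
      Real.exp (-(π * lam1 * (P₁ * β * d ^ α / P₂) ^ (2 / α) *
        ∫ u in Set.Ioi (0 : ℝ), 1 / (1 + u ^ (α / 2)))) := by
  have hda : 0 < d ^ α := Real.rpow_pos_of_pos hd α
  constructor
  · have hgInt := gInt lam1 P₁ P₂ d α hlam1 hP1 hP2 hd hα
    have hA := angular_tendsto P₁ P₂ d α β hP1 hP2 hd hα hβ
    have hK := kernel_tendsto lam1 P₁ P₂ d α hlam1 hP1 hP2 hd hα hgInt
    have hIdent := gIdent lam1 P₁ P₂ d α hlam1 hP1 hP2 hd hα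
    have hval : -(β ^ (2/α)) * (∫ y in Set.Ioi (0:ℝ),
        (2 * π * lam1 * P₁ * d ^ α * y ^ (1 - α)) / (P₂ + P₁ * d ^ α * y ^ (-α))) =
        -(π * lam1 * (P₁ * β * d ^ α / P₂) ^ (2/α) *
          ∫ u in Set.Ioi (0:ℝ), 1 / (1 + u ^ (α/2))) := by
      rw [hIdent]
      have h1 : (P₁ * β * d ^ α / P₂) ^ (2/α) = β ^ (2/α) * (P₁ * d ^ α / P₂) ^ (2/α) := by
        rw [show P₁ * β * d ^ α / P₂ = β * (P₁ * d ^ α / P₂) by ring,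
          Real.mul_rpow hβ.le (by positivity)]
      rw [h1]; ring
    have hE : Filter.Tendsto (fun R => Real.exp (-(β ^ (2/α)) *
        ∫ y in Set.Ioi (max (R - d) 0), opKernel lam1 P₁ P₂ d α R y))
        (nhdsWithin 0 (Set.Ioi 0))
        (nhds (Real.exp (-(π * lam1 * (P₁ * β * d ^ α / P₂) ^ (2/α) *
          ∫ u in Set.Ioi (0:ℝ), 1 / (1 + u ^ (α/2)))))) := by
      rw [← hval]
      exact (Real.continuous_exp.tendsto _).comp (hK.const_mul (-(β ^ (2/α))))
    have hAfin : Filter.Tendsto (fun R => (1 / (2 * π)) * ∫ ν in (0:ℝ)..(2*π),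
        P₂ / (P₂ + P₁ * β * d ^ α * (R ^ 2 - 2 * d * R * Real.cos ν + d ^ 2) ^ (-(α/2))))
        (nhdsWithin 0 (Set.Ioi 0)) (nhds (P₂ / (P₂ + P₁ * β))) := by
      have h2 := hA.const_mul (1 / (2 * π))
      have h3 : (1 / (2 * π)) * (2 * π * (P₂ / (P₂ + P₁ * β))) = P₂ / (P₂ + P₁ * β) := by
        have hπ : (π : ℝ) ≠ 0 := Real.pi_ne_zero
        field_simp
      rwa [h3] at h2
    simp only [opProb]
    exact hAfin.mul hE
  · apply mul_pos
    · exact div_pos hP2 (by positivity)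
    · exact Real.exp_pos _
end

section
/- Let α > 2. The function f(β) = ln(1+β)·β^{−2/α} on (0,∞) attains its maximum at the unique β* > 0 satisfying αβ*/(1+β*) = 2 ln(1+β*), equivalently β*/((1+β*)ln(1+β*)) = 2/α; moreover β* is strictly decreasing as a function of 2/α (i.e., β* decreases as α decreases toward 2 and increases as α grows). -/
open Real

noncomputable def asePsi (β : ℝ) : ℝ := 2 * (1 + β) * Real.log (1 + β) / β

lemma asePsi_hasDeriv {x : ℝ} (hx : 0 < x) :
    HasDerivAt asePsi ((2 * x - 2 * Real.log (1 + x)) / x ^ 2) x := by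
  have h1x : (0:ℝ) < 1 + x := by linarith
  have h1 : HasDerivAt (fun β : ℝ => Real.log (1 + β)) (1 / (1 + x)) x := by
    have := ((hasDerivAt_id x).const_add 1).log h1x.ne'
    simpa using this
  have h2 : HasDerivAt (fun β : ℝ => 2 * (1 + β) * Real.log (1 + β))
      (2 * Real.log (1 + x) + 2 * (1 + x) * (1 / (1 + x))) x := by
    have ha : HasDerivAt (fun β : ℝ => 2 * (1 + β)) 2 x := by
      simpa using ((hasDerivAt_id x).const_add 1).const_mul 2
    simpa using ha.fun_mul h1
  have h3 := h2.fun_div (hasDerivAt_id x) hx.ne'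
  refine h3.congr_deriv ?_
  simp only [id]
  field_simp
  ring

lemma aseLog_lt {x : ℝ} (hx : 0 < x) : Real.log (1 + x) < x := by
  have := Real.log_lt_sub_one_of_pos (by linarith : (0:ℝ) < 1 + x)
    (by intro h; nlinarith : (1:ℝ) + x ≠ 1)
  linarith

lemma asePsi_strictMono : StrictMonoOn asePsi (Set.Ioi 0) := by
  apply strictMonoOn_of_deriv_pos (convex_Ioi 0)
  · exact fun x hx => ((asePsi_hasDeriv (Set.mem_Ioi.mp hx)).continuousAt).continuousWithinAt
  · intro x hx
    rw [interior_Ioi] at hx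
    have hx' : 0 < x := hx
    rw [(asePsi_hasDeriv hx').deriv]
    exact div_pos (by have := aseLog_lt hx'; linarith) (by positivity)

lemma aseF_hasDeriv {α x : ℝ} (hα : 2 < α) (hx : 0 < x) :
    HasDerivAt (fun β : ℝ => Real.log (1 + β) * β ^ (-(2 / α)))
      (x ^ (-(2 / α)) * ((α * x - 2 * (1 + x) * Real.log (1 + x)) / (α * x * (1 + x)))) x := by
  have h1x : (0:ℝ) < 1 + x := by linarith
  have hα0 : (0:ℝ) < α := by linarith
  have h1 : HasDerivAt (fun β : ℝ => Real.log (1 + β)) (1 / (1 + x)) x := by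
    have := ((hasDerivAt_id x).const_add 1).log h1x.ne'
    simpa using this
  have h2 : HasDerivAt (fun β : ℝ => β ^ (-(2 / α))) ((-(2 / α)) * x ^ ((-(2 / α)) - 1)) x :=
    Real.hasDerivAt_rpow_const (Or.inl hx.ne')
  have h3 := h1.fun_mul h2
  refine h3.congr_deriv ?_
  rw [show (-(2 / α)) - 1 = (-(2 / α)) - 1 from rfl, Real.rpow_sub hx, Real.rpow_one]
  field_simp
  ring

/-- For `α > 2`, `f(β) = ln(1+β)β^{−2/α}` attains its maximum on `(0,∞)` at the unique
`β* > 0` with `αβ*/(1+β*) = 2ln(1+β*)`, equivalently `β*/((1+β*)ln(1+β*)) = 2/α`, and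
`β*` is increasing in `α` (decreasing in `2/α`). -/
theorem ase_optimal_target_no_interference (α : ℝ) (hα : 2 < α) :
    (∃! βs : ℝ, 0 < βs ∧ α * βs / (1 + βs) = 2 * Real.log (1 + βs)) ∧
    (∀ βs : ℝ, 0 < βs → α * βs / (1 + βs) = 2 * Real.log (1 + βs) →
      (∀ β : ℝ, 0 < β →
        Real.log (1 + β) * β ^ (-(2 / α)) ≤ Real.log (1 + βs) * βs ^ (-(2 / α))) ∧
      βs / ((1 + βs) * Real.log (1 + βs)) = 2 / α) ∧
    (∀ α' βs βs' : ℝ, 2 < α' → α < α' →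
      0 < βs → α * βs / (1 + βs) = 2 * Real.log (1 + βs) →
      0 < βs' → α' * βs' / (1 + βs') = 2 * Real.log (1 + βs') →
      βs < βs') := by
  have hα0 : (0:ℝ) < α := by linarith
  -- the fixed point equation is equivalent to asePsi β = α
  have key : ∀ (a β : ℝ), 0 < β →
      (a * β / (1 + β) = 2 * Real.log (1 + β) ↔ asePsi β = a) := by
    intro a β hβ
    have h1β : (0:ℝ) < 1 + β := by linarith
    unfold asePsi
    rw [div_eq_iff h1β.ne', div_eq_iff hβ.ne']
    constructor <;> intro h <;> linear_combination -h
  refine ⟨?_, ?_, ?_⟩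
  · -- existence and uniqueness
    set a := (α - 2) / 4 with ha_def
    set b := Real.exp α - 1 with hb_def
    have ha : 0 < a := by simp only [ha_def]; linarith
    have hexp := Real.add_one_lt_exp (show α ≠ 0 by linarith)
    have hb0 : 0 < b := by simp only [hb_def]; linarith
    have hab : a ≤ b := by simp only [ha_def, hb_def]; linarith
    have hcont : ContinuousOn asePsi (Set.Icc a b) := fun x hx =>
      ((asePsi_hasDeriv (lt_of_lt_of_le ha hx.1)).continuousAt).continuousWithinAt
    have hψa : asePsi a ≤ α := by
      unfold asePsi
      rw [div_le_iff₀ ha]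
      have hl := aseLog_lt ha
      have hlp : 0 < Real.log (1 + a) := Real.log_pos (by linarith)
      nlinarith
    have hψb : α ≤ asePsi b := by
      unfold asePsi
      have h1b : (1:ℝ) + b = Real.exp α := by simp only [hb_def]; ring
      rw [h1b, Real.log_exp, le_div_iff₀ hb0]
      nlinarith
    obtain ⟨βs, hβsmem, hβseq⟩ := intermediate_value_Icc hab hcont ⟨hψa, hψb⟩
    have hβs0 : 0 < βs := lt_of_lt_of_le ha hβsmem.1
    refine ⟨βs, ⟨hβs0, (key α βs hβs0).mpr hβseq⟩, ?_⟩
    rintro y ⟨hy0, hyeq⟩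
    exact asePsi_strictMono.injOn (Set.mem_Ioi.mpr hy0) (Set.mem_Ioi.mpr hβs0)
      (by rw [(key α y hy0).mp hyeq, hβseq])
  · -- maximality and the equivalent form
    intro βs hβs heq
    have hψ : asePsi βs = α := (key α βs hβs).mp heq
    have h1βs : (0:ℝ) < 1 + βs := by linarith
    have hL : 0 < Real.log (1 + βs) := Real.log_pos (by linarith)
    constructor
    · -- maximality
      set f : ℝ → ℝ := fun β => Real.log (1 + β) * β ^ (-(2 / α)) with hf_def
      have hmono : StrictMonoOn f (Set.Ioc 0 βs) := by
        apply strictMonoOn_of_deriv_pos (convex_Ioc 0 βs)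
        · exact fun x hx => ((aseF_hasDeriv hα hx.1).continuousAt).continuousWithinAt
        · intro x hx
          rw [interior_Ioc] at hx
          have hx0 : 0 < x := hx.1
          have hψx : asePsi x < α := by
            rw [← hψ]
            exact asePsi_strictMono (Set.mem_Ioi.mpr hx0) (Set.mem_Ioi.mpr hβs) hx.2
          have hnum : 0 < α * x - 2 * (1 + x) * Real.log (1 + x) := by
            unfold asePsi at hψx
            rw [div_lt_iff₀ hx0] at hψx
            linarith
          rw [(aseF_hasDeriv hα hx0).deriv]
          exact mul_pos (Real.rpow_pos_of_pos hx0 _)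
            (div_pos hnum (by positivity))
      have hanti : StrictAntiOn f (Set.Ici βs) := by
        apply strictAntiOn_of_deriv_neg (convex_Ici βs)
        · exact fun x hx =>
            ((aseF_hasDeriv hα (lt_of_lt_of_le hβs hx)).continuousAt).continuousWithinAt
        · intro x hx
          rw [interior_Ici] at hx
          have hx0 : 0 < x := lt_trans hβs hx
          have hψx : α < asePsi x := by
            rw [← hψ]
            exact asePsi_strictMono (Set.mem_Ioi.mpr hβs) (Set.mem_Ioi.mpr hx0) hx
          have hnum : α * x - 2 * (1 + x) * Real.log (1 + x) < 0 := by
            unfold asePsi at hψx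
            rw [lt_div_iff₀ hx0] at hψx
            linarith
          rw [(aseF_hasDeriv hα hx0).deriv]
          exact mul_neg_of_pos_of_neg (Real.rpow_pos_of_pos hx0 _)
            (div_neg_of_neg_of_pos hnum (by positivity))
      intro β hβ
      rcases le_or_gt β βs with h | h
      · exact hmono.monotoneOn ⟨hβ, h⟩ ⟨hβs, le_refl βs⟩ h
      · exact hanti.antitoneOn (Set.mem_Ici.mpr (le_refl βs)) (Set.mem_Ici.mpr h.le) h.le
    · -- equivalent form
      have hψ' : 2 * (1 + βs) * Real.log (1 + βs) = α * βs := by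
        unfold asePsi at hψ
        rw [div_eq_iff hβs.ne'] at hψ
        linarith
      rw [div_eq_div_iff (by positivity) hα0.ne']
      linear_combination -hψ'
  · -- monotonicity in α
    intro α' βs βs' hα' hαα' hβs heq hβs' heq'
    have h1 : asePsi βs = α := (key α βs hβs).mp heq
    have h2 : asePsi βs' = α' := (key α' βs' hβs').mp heq'
    by_contra h
    push_neg at h
    have := asePsi_strictMono.monotoneOn (Set.mem_Ioi.mpr hβs') (Set.mem_Ioi.mpr hβs) h
    rw [h1, h2] at this
    linarith
end

section
/- Let α > 2, C ≥ 0. The function A(β) = ln(1+β)·β^{−2/α}·exp(−C·β^{2/α}) on (0,∞) has derivative zero exactly at solutions of −2C β^{2/α} ln(1+β) + αβ/(1+β) − 2 ln(1+β) = 0, and this equation has a unique positive solution β₀; A is increasing on (0, β₀) and decreasing on (β₀, ∞). -/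
open Real Set Filter

noncomputable def ASE.F (α C β : ℝ) : ℝ :=
  -2 * C * β ^ (2 / α) * Real.log (1 + β) + α * β / (1 + β) - 2 * Real.log (1 + β)

noncomputable def ASE.G (α C β : ℝ) : ℝ :=
  α * β / ((1 + β) * Real.log (1 + β)) - 2 - 2 * C * β ^ (2 / α)

lemma ASE.hasDerivAt_A {α C : ℝ} (hα : 2 < α) {β : ℝ} (hβ : 0 < β) :
    HasDerivAt (fun b : ℝ =>
        Real.log (1 + b) * b ^ (-(2 / α)) * Real.exp (-C * b ^ (2 / α)))
      (β ^ (-(2 / α)) * Real.exp (-C * β ^ (2 / α)) / (α * β) * ASE.F α C β) β := by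
  have hα0 : (0:ℝ) < α := by linarith
  have h1β : (0:ℝ) < 1 + β := by linarith
  have hL : HasDerivAt (fun b : ℝ => Real.log (1 + b)) (1 / (1 + β)) β := by
    have h : HasDerivAt (fun b : ℝ => 1 + b) 1 β := (hasDerivAt_id β).const_add 1
    simpa using h.log h1β.ne'
  have hP : HasDerivAt (fun b : ℝ => b ^ (-(2 / α))) (-(2 / α) * β ^ (-(2 / α) - 1)) β :=
    Real.hasDerivAt_rpow_const (Or.inl hβ.ne')
  have hXd : HasDerivAt (fun b : ℝ => b ^ (2 / α)) ((2 / α) * β ^ (2 / α - 1)) β :=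
    Real.hasDerivAt_rpow_const (Or.inl hβ.ne')
  have hE : HasDerivAt (fun b : ℝ => Real.exp (-C * b ^ (2 / α)))
      (Real.exp (-C * β ^ (2 / α)) * (-C * ((2 / α) * β ^ (2 / α - 1)))) β :=
    (hXd.const_mul (-C)).exp
  have htot := (hL.mul hP).mul hE
  refine htot.congr_deriv (Eq.symm ?_)
  simp only [Pi.mul_apply]
  have hs1 : β ^ (-(2 / α) - 1) = (β ^ (2 / α))⁻¹ / β := by
    rw [Real.rpow_sub hβ, Real.rpow_one, Real.rpow_neg hβ.le]
  have hs2 : β ^ (2 / α - 1) = β ^ (2 / α) / β := by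
    rw [Real.rpow_sub hβ, Real.rpow_one]
  have hs3 : β ^ (-(2 / α)) = (β ^ (2 / α))⁻¹ := Real.rpow_neg hβ.le _
  rw [ASE.F, hs1, hs2, hs3]
  have hX0 : 0 < β ^ (2 / α) := Real.rpow_pos_of_pos hβ _
  field_simp
  ring

lemma ASE.hasDerivAt_G {α C : ℝ} (hα : 2 < α) {β : ℝ} (hβ : 0 < β) :
    HasDerivAt (ASE.G α C)
      (α * (Real.log (1 + β) - β) / ((1 + β) * Real.log (1 + β)) ^ 2
        - 2 * C * ((2 / α) * β ^ (2 / α - 1))) β := by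
  have h1β : (0:ℝ) < 1 + β := by linarith
  have hL0 : 0 < Real.log (1 + β) := Real.log_pos (by linarith)
  have hLd : HasDerivAt (fun b : ℝ => Real.log (1 + b)) (1 / (1 + β)) β := by
    have h : HasDerivAt (fun b : ℝ => 1 + b) 1 β := (hasDerivAt_id β).const_add 1
    simpa using h.log h1β.ne'
  have h1d : HasDerivAt (fun b : ℝ => 1 + b) 1 β := (hasDerivAt_id β).const_add 1
  have hv : HasDerivAt (fun b : ℝ => (1 + b) * Real.log (1 + b))
      (1 * Real.log (1 + β) + (1 + β) * (1 / (1 + β))) β := h1d.mul hLd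
  have hnum : HasDerivAt (fun b : ℝ => α * b) α β := by
    simpa using (hasDerivAt_id β).const_mul α
  have hv0 : (1 + β) * Real.log (1 + β) ≠ 0 := by positivity
  have hdiv := hnum.div hv hv0
  have hXd : HasDerivAt (fun b : ℝ => b ^ (2 / α)) ((2 / α) * β ^ (2 / α - 1)) β :=
    Real.hasDerivAt_rpow_const (Or.inl hβ.ne')
  have htot := (hdiv.sub_const 2).sub (hXd.const_mul (2 * C))
  refine htot.congr_deriv (Eq.symm ?_)
  field_simp
  ring_nf

lemma ASE.deriv_G_neg {α C : ℝ} (hα : 2 < α) (hC : 0 ≤ C) {β : ℝ} (hβ : 0 < β) :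
    α * (Real.log (1 + β) - β) / ((1 + β) * Real.log (1 + β)) ^ 2
      - 2 * C * ((2 / α) * β ^ (2 / α - 1)) < 0 := by
  have hα0 : (0:ℝ) < α := by linarith
  have h1β : (0:ℝ) < 1 + β := by linarith
  have hL0 : 0 < Real.log (1 + β) := Real.log_pos (by linarith)
  have hLβ : Real.log (1 + β) < β := by
    have := Real.log_lt_sub_one_of_pos h1β (by linarith)
    linarith
  have h1 : α * (Real.log (1 + β) - β) / ((1 + β) * Real.log (1 + β)) ^ 2 < 0 := by
    apply div_neg_of_neg_of_pos
    · have : Real.log (1 + β) - β < 0 := by linarith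
      exact mul_neg_of_pos_of_neg hα0 this
    · positivity
  have h2 : 0 ≤ 2 * C * ((2 / α) * β ^ (2 / α - 1)) := by positivity
  linarith

lemma ASE.G_strictAntiOn {α C : ℝ} (hα : 2 < α) (hC : 0 ≤ C) :
    StrictAntiOn (ASE.G α C) (Set.Ioi 0) := by
  apply strictAntiOn_of_deriv_neg (convex_Ioi 0)
  · exact fun x hx =>
      ((ASE.hasDerivAt_G hα hx).differentiableAt.continuousAt).continuousWithinAt
  · intro x hx
    rw [interior_Ioi] at hx
    rw [(ASE.hasDerivAt_G hα hx).deriv]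
    exact ASE.deriv_G_neg hα hC hx

lemma ASE.F_eq {α C : ℝ} (hα : 2 < α) {β : ℝ} (hβ : 0 < β) :
    ASE.F α C β = Real.log (1 + β) * ASE.G α C β := by
  have h1β : (0:ℝ) < 1 + β := by linarith
  have hL0 : 0 < Real.log (1 + β) := Real.log_pos (by linarith)
  rw [ASE.F, ASE.G]
  field_simp
  ring

lemma ASE.exists_G_zero {α C : ℝ} (hα : 2 < α) (hC : 0 ≤ C) :
    ∃ β₀ : ℝ, 0 < β₀ ∧ ASE.G α C β₀ = 0 := by
  have hα0 : (0:ℝ) < α := by linarith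
  have hp : 0 < 2 / α := by positivity
  -- a small point where G is positive
  have htend : Tendsto (fun x : ℝ => α / (1 + x) - 2 - 2 * C * x ^ (2 / α))
      (nhdsWithin 0 (Set.Ioi 0)) (nhds (α - 2)) := by
    have h1 : Tendsto (fun x : ℝ => α / (1 + x)) (nhds (0:ℝ)) (nhds (α / (1 + 0))) := by
      apply ContinuousAt.tendsto
      exact continuousAt_const.div (continuousAt_const.add continuousAt_id) (by norm_num)
    have h2 : Tendsto (fun x : ℝ => x ^ (2 / α)) (nhds (0:ℝ)) (nhds ((0:ℝ) ^ (2 / α))) :=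
      (Real.continuousAt_rpow_const 0 (2 / α) (Or.inr hp.le)).tendsto
    have h2' : Tendsto (fun x : ℝ => 2 * C * x ^ (2 / α)) (nhds (0:ℝ)) (nhds 0) := by
      have := h2.const_mul (2 * C)
      simpa [Real.zero_rpow hp.ne'] using this
    have := (h1.sub (tendsto_const_nhds (x := (2:ℝ)))).sub h2'
    have h3 : α / (1 + 0) - 2 - 0 = α - 2 := by norm_num
    rw [h3] at this
    exact this.mono_left nhdsWithin_le_nhds
  have hev : ∀ᶠ x in nhdsWithin (0:ℝ) (Set.Ioi 0),
      0 < α / (1 + x) - 2 - 2 * C * x ^ (2 / α) :=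
    htend.eventually (eventually_gt_nhds (by linarith))
  obtain ⟨x₀, hx₀, hx₀pos⟩ := (hev.and self_mem_nhdsWithin).exists
  have hx₀pos : (0:ℝ) < x₀ := hx₀pos
  have h1x₀ : (0:ℝ) < 1 + x₀ := by linarith
  have hLx₀ : 0 < Real.log (1 + x₀) := Real.log_pos (by linarith)
  have hLle : Real.log (1 + x₀) ≤ x₀ := by
    have := Real.log_le_sub_one_of_pos h1x₀
    linarith
  have hGx₀ : 0 < ASE.G α C x₀ := by
    have hkey : α / (1 + x₀) ≤ α * x₀ / ((1 + x₀) * Real.log (1 + x₀)) := by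
      have heq : α / (1 + x₀) = α * x₀ / ((1 + x₀) * x₀) := by
        field_simp
      rw [heq]
      apply div_le_div_of_nonneg_left (by positivity) (by positivity)
      exact mul_le_mul_of_nonneg_left hLle h1x₀.le
    have := hx₀
    rw [ASE.G]
    linarith
  -- a large point where G is negative
  set y : ℝ := Real.exp α - 1 with hy_def
  have hexp : α + 1 ≤ Real.exp α := Real.add_one_le_exp α
  have hy : 0 < y := by simp only [hy_def]; linarith
  have hlogy : Real.log (1 + y) = α := by
    rw [hy_def]
    have : 1 + (Real.exp α - 1) = Real.exp α := by ring
    rw [this, Real.log_exp]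
  have hGy : ASE.G α C y < 0 := by
    rw [ASE.G, hlogy]
    have h1 : α * y / ((1 + y) * α) = y / (1 + y) := by
      rw [mul_comm (1 + y) α]
      exact mul_div_mul_left _ _ hα0.ne'
    rw [h1]
    have h2 : y / (1 + y) < 1 := (div_lt_one (by linarith)).mpr (by linarith)
    have h3 : 0 ≤ 2 * C * y ^ (2 / α) := by positivity
    linarith
  -- x₀ < y
  have hxy : x₀ < y := by
    by_contra h
    push_neg at h
    rcases eq_or_lt_of_le h with h' | h'
    · rw [h'] at hGy; linarith
    · have := ASE.G_strictAntiOn hα hC (Set.mem_Ioi.mpr hy) (Set.mem_Ioi.mpr hx₀pos) h'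
      linarith
  -- IVT
  have hsub : Set.Icc x₀ y ⊆ Set.Ioi 0 := fun z hz => lt_of_lt_of_le hx₀pos hz.1
  have hcont : ContinuousOn (ASE.G α C) (Set.Icc x₀ y) :=
    (fun x hx => ((ASE.hasDerivAt_G hα (hsub hx)).differentiableAt.continuousAt
      ).continuousWithinAt)
  have hmem : (0:ℝ) ∈ Set.Icc (ASE.G α C y) (ASE.G α C x₀) := ⟨hGy.le, hGx₀.le⟩
  obtain ⟨β₀, hβ₀mem, hβ₀⟩ := intermediate_value_Icc' hxy.le hcont hmem
  exact ⟨β₀, lt_of_lt_of_le hx₀pos hβ₀mem.1, hβ₀⟩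

/-- For `α > 2`, `C ≥ 0`, the ASE `A(β) = ln(1+β)β^{−2/α}exp(−Cβ^{2/α})` has vanishing
derivative exactly at solutions of
`−2Cβ^{2/α}ln(1+β) + αβ/(1+β) − 2ln(1+β) = 0`, this equation has a unique positive
solution `β₀`, and `A` is increasing on `(0,β₀)` and decreasing on `(β₀,∞)`. -/
theorem ase_unimodal (α C : ℝ) (hα : 2 < α) (hC : 0 ≤ C) :
    (∀ β : ℝ, 0 < β →
      (deriv (fun b : ℝ =>
          Real.log (1 + b) * b ^ (-(2 / α)) * Real.exp (-C * b ^ (2 / α))) β = 0 ↔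
        -2 * C * β ^ (2 / α) * Real.log (1 + β) + α * β / (1 + β)
          - 2 * Real.log (1 + β) = 0)) ∧
    (∃! β₀ : ℝ, 0 < β₀ ∧
      -2 * C * β₀ ^ (2 / α) * Real.log (1 + β₀) + α * β₀ / (1 + β₀)
        - 2 * Real.log (1 + β₀) = 0) ∧
    (∀ β₀ : ℝ, 0 < β₀ →
      -2 * C * β₀ ^ (2 / α) * Real.log (1 + β₀) + α * β₀ / (1 + β₀)
        - 2 * Real.log (1 + β₀) = 0 →
      StrictMonoOn (fun b : ℝ =>
          Real.log (1 + b) * b ^ (-(2 / α)) * Real.exp (-C * b ^ (2 / α)))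
        (Set.Ioc 0 β₀) ∧
      StrictAntiOn (fun b : ℝ =>
          Real.log (1 + b) * b ^ (-(2 / α)) * Real.exp (-C * b ^ (2 / α)))
        (Set.Ici β₀)) := by
  have hα0 : (0:ℝ) < α := by linarith
  have key : ∀ β : ℝ, 0 < β →
      -2 * C * β ^ (2 / α) * Real.log (1 + β) + α * β / (1 + β)
        - 2 * Real.log (1 + β) = ASE.F α C β := fun β _ => rfl
  refine ⟨?_, ?_, ?_⟩
  · intro β hβ
    rw [(ASE.hasDerivAt_A hα hβ).deriv, key β hβ]
    have hK : 0 < β ^ (-(2 / α)) * Real.exp (-C * β ^ (2 / α)) / (α * β) := by positivity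
    rw [mul_eq_zero, or_iff_right hK.ne']
  · obtain ⟨β₀, hβ₀pos, hGβ₀⟩ := ASE.exists_G_zero hα hC
    refine ⟨β₀, ⟨hβ₀pos, ?_⟩, ?_⟩
    · rw [key β₀ hβ₀pos, ASE.F_eq hα hβ₀pos, hGβ₀, mul_zero]
    · rintro β₁ ⟨hβ₁pos, hF₁⟩
      rw [key β₁ hβ₁pos, ASE.F_eq hα hβ₁pos] at hF₁
      have hL1 : Real.log (1 + β₁) ≠ 0 := (Real.log_pos (by linarith)).ne'
      have hG₁ : ASE.G α C β₁ = 0 := by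
        rcases mul_eq_zero.mp hF₁ with h | h
        · exact absurd h hL1
        · exact h
      exact (ASE.G_strictAntiOn hα hC).injOn (Set.mem_Ioi.mpr hβ₁pos)
        (Set.mem_Ioi.mpr hβ₀pos) (hG₁.trans hGβ₀.symm)
  · intro β₀ hβ₀pos hF₀
    rw [key β₀ hβ₀pos, ASE.F_eq hα hβ₀pos] at hF₀
    have hL0 : Real.log (1 + β₀) ≠ 0 := (Real.log_pos (by linarith)).ne'
    have hGβ₀ : ASE.G α C β₀ = 0 := by
      rcases mul_eq_zero.mp hF₀ with h | h
      · exact absurd h hL0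
      · exact h
    constructor
    · apply strictMonoOn_of_deriv_pos (convex_Ioc 0 β₀)
      · exact fun x hx =>
          ((ASE.hasDerivAt_A hα hx.1).differentiableAt.continuousAt).continuousWithinAt
      · intro x hx
        rw [interior_Ioc] at hx
        rw [(ASE.hasDerivAt_A hα hx.1).deriv]
        have hK : 0 < x ^ (-(2 / α)) * Real.exp (-C * x ^ (2 / α)) / (α * x) := by
          have := hx.1; positivity
        apply mul_pos hK
        rw [ASE.F_eq hα hx.1]
        apply mul_pos (Real.log_pos (by linarith [hx.1]))
        have := ASE.G_strictAntiOn hα hC (Set.mem_Ioi.mpr hx.1)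
          (Set.mem_Ioi.mpr hβ₀pos) hx.2
        linarith
    · apply strictAntiOn_of_deriv_neg (convex_Ici β₀)
      · intro x hx
        have hxpos : 0 < x := lt_of_lt_of_le hβ₀pos hx
        exact ((ASE.hasDerivAt_A hα hxpos).differentiableAt.continuousAt).continuousWithinAt
      · intro x hx
        rw [interior_Ici] at hx
        have hxpos : 0 < x := hβ₀pos.trans hx
        rw [(ASE.hasDerivAt_A hα hxpos).deriv]
        have hK : 0 < x ^ (-(2 / α)) * Real.exp (-C * x ^ (2 / α)) / (α * x) := by positivity
        apply mul_neg_of_pos_of_neg hK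
        rw [ASE.F_eq hα hxpos]
        apply mul_neg_of_pos_of_neg (Real.log_pos (by linarith))
        have := ASE.G_strictAntiOn hα hC (Set.mem_Ioi.mpr hβ₀pos)
          (Set.mem_Ioi.mpr hxpos) hx
        linarith
end
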